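/- (Moving a dotted arc.) Over R = MvPolynomial (Fin 6) ℤ with variables x0, …, x5, the length-2 Koszul factorizations K((x1 − x3, x3 − x5), ((x2 − x0)(x2 − x1 − x3 + x0), (x4 − x0)(x4 − x3 − x5 + x0))) and K((x1 − x5, x3 − x5), ((x2 − x0)(x2 − x1 − x5 + x0), (x4 − x2)(x4 − x3 − x5 + x2))) have equal potentials and are isomorphic: there is an R-linear automorphism φ of R⁴ with φ∘D = D′∘φ, where D and D′ are the two differentials. -/
import Mathlib


open LinearMap

/-- The length-2 Koszul factorization `K((a1,a2),(b1,b2))`: the free module `R⁴` with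
basis `e, f1, f2, f12` (coordinates `0,1,2,3`) and differential determined by
`D e = a1 • f1 + a2 • f2`, `D f1 = b1 • e - a2 • f12`, `D f2 = b2 • e + a1 • f12`,
`D f12 = b1 • f2 - b2 • f1`. -/
noncomputable def koszulD {R : Type*} [CommRing R] (a1 a2 b1 b2 : R) :
    (Fin 4 → R) →ₗ[R] (Fin 4 → R) :=
  LinearMap.pi
    ![b1 • proj 1 + b2 • proj 2,
      a1 • proj 0 - b2 • proj 3,
      a2 • proj 0 + b1 • proj 3,
      a1 • proj 2 - a2 • proj 1]

namespace Stmt14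

noncomputable section
open MvPolynomial

abbrev R6 : Type := MvPolynomial (Fin 6) ℤ

def x0 : R6 := X 0
def x1 : R6 := X 1
def x2 : R6 := X 2
def x3 : R6 := X 3
def x4 : R6 := X 4
def x5 : R6 := X 5

/-- The differential of `K((x1 − x3, x3 − x5),
((x2 − x0)(x2 − x1 − x3 + x0), (x4 − x0)(x4 − x3 − x5 + x0)))`. -/
def D : (Fin 4 → R6) →ₗ[R6] (Fin 4 → R6) :=
  koszulD (x1 - x3) (x3 - x5)
    ((x2 - x0) * (x2 - x1 - x3 + x0)) ((x4 - x0) * (x4 - x3 - x5 + x0))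

/-- The differential of `K((x1 − x5, x3 − x5),
((x2 − x0)(x2 − x1 − x5 + x0), (x4 − x2)(x4 − x3 − x5 + x2)))`. -/
def D' : (Fin 4 → R6) →ₗ[R6] (Fin 4 → R6) :=
  koszulD (x1 - x5) (x3 - x5)
    ((x2 - x0) * (x2 - x1 - x5 + x0)) ((x4 - x2) * (x4 - x3 - x5 + x2))


def phiA : (Fin 4 → R6) →ₗ[R6] (Fin 4 → R6) :=
  LinearMap.pi ![proj 0 - (x2 - x0) • proj 3,
    (proj (1 : Fin 4) : (Fin 4 → R6) →ₗ[R6] R6) + proj 2, proj 2, proj 3]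

def phiB : (Fin 4 → R6) →ₗ[R6] (Fin 4 → R6) :=
  LinearMap.pi ![proj 0 + (x2 - x0) • proj 3,
    (proj (1 : Fin 4) : (Fin 4 → R6) →ₗ[R6] R6) - proj 2, proj 2, proj 3]

/-- Moving a dotted arc. The two Koszul factorizations above have
equal potentials and are isomorphic via an `R`-linear automorphism `φ` of `R⁴` with
`φ ∘ D = D' ∘ φ`. -/
theorem stmt_14 :
    (x1 - x3) * ((x2 - x0) * (x2 - x1 - x3 + x0)) +
        (x3 - x5) * ((x4 - x0) * (x4 - x3 - x5 + x0)) =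
      (x1 - x5) * ((x2 - x0) * (x2 - x1 - x5 + x0)) +
        (x3 - x5) * ((x4 - x2) * (x4 - x3 - x5 + x2)) ∧
    ∃ φ : (Fin 4 → R6) ≃ₗ[R6] (Fin 4 → R6), ∀ v : Fin 4 → R6, φ (D v) = D' (φ v) := by
  constructor
  · ring
  · refine ⟨LinearEquiv.ofLinear phiA phiB ?_ ?_, ?_⟩
    · ext v i
      fin_cases i <;> simp [phiA, phiB, LinearMap.pi_apply]
    · ext v i
      fin_cases i <;> simp [phiA, phiB, LinearMap.pi_apply]
    · intro v
      funext i
      fin_cases i <;>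
        simp [phiA, phiB, D, D', koszulD, x0, x1, x2, x3, x4, x5, LinearMap.pi_apply,
          smul_eq_mul] <;> ring

end

end Stmt14
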